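/- arXiv:2506.21192 — 9 statements merged into one kernel-verified Lean document; each statement's English description precedes it below -/
import Mathlib

section
/- Let X be an n×k real matrix of rank k (n>k), Ω an n×n positive definite matrix, and K a k×k positive semidefinite matrix that is NOT positive definite (i.e., rank(K) < k). Set T = Ω + X K X^T and F = K X^T T^{-1}. Then there is no k×k matrix G with X = T F^T G; that is, the column space of X is not contained in the column space of T F^T. -/
/-! `T = Ω + X K Xᵀ` is symmetric positive definite, so `T (K Xᵀ T⁻¹)ᵀ = X K`. Hence
`X = T Fᵀ G` would factor `X` through `K`, giving `k = rank X ≤ rank K < k`. -/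

open Matrix

namespace Matrix

variable {m n : Type*} [Fintype m] [Fintype n]

lemma PosDef.add_mul_mul_transpose {Ω : Matrix n n ℝ} (hΩ : Ω.PosDef) (X : Matrix n m ℝ)
    {K : Matrix m m ℝ} (hK : K.PosSemidef) : (Ω + X * K * Xᵀ).PosDef :=
  hΩ.add_posSemidef (hK.mul_mul_conjTranspose_same X)

lemma mul_transpose_mul_mul_inv [DecidableEq n] {R : Type*} [CommRing R] {T : Matrix n n R}
    (hT : T.IsSymm) (hTdet : IsUnit T.det) (K : Matrix m m R) (X : Matrix n m R) :
    T * (K * Xᵀ * T⁻¹)ᵀ = X * Kᵀ := by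
  rw [transpose_mul, transpose_mul, transpose_transpose, transpose_nonsing_inv, hT.eq,
    ← Matrix.mul_assoc, mul_nonsing_inv T hTdet, Matrix.one_mul]

lemma rank_le_of_eq_mul_mul {l p R : Type*} [Fintype l] [Fintype p] [CommRing R]
    [StrongRankCondition R] {K : Matrix m m R} {A : Matrix l p R} {B : Matrix l m R}
    {C : Matrix m p R} (h : A = B * K * C) : A.rank ≤ K.rank :=
  h ▸ (rank_mul_le_left _ C).trans (rank_mul_le_right B K)

end Matrix

theorem stmt_3_general {n k : ℕ}
    (X : Matrix (Fin n) (Fin k) ℝ) (hX : X.rank = k)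
    (Ω : Matrix (Fin n) (Fin n) ℝ) (hΩ : Ω.PosDef)
    (K : Matrix (Fin k) (Fin k) ℝ) (hK : K.PosSemidef) (hKnot : K.rank < k) :
    ¬ ∃ G : Matrix (Fin k) (Fin k) ℝ,
      X = (Ω + X * K * Xᵀ) * (K * Xᵀ * (Ω + X * K * Xᵀ)⁻¹)ᵀ * G := by
  rintro ⟨G, hG⟩
  have hT := hΩ.add_mul_mul_transpose X hK
  rw [mul_transpose_mul_mul_inv (isHermitian_iff_isSymm.mp hT.isHermitian) hT.det_pos.ne'.isUnit,
    (isHermitian_iff_isSymm.mp hK.isHermitian).eq] at hG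
  have := rank_le_of_eq_mul_mul hG
  omega

theorem stmt_3 {n k : ℕ} (hnk : k < n)
    (X : Matrix (Fin n) (Fin k) ℝ) (hX : X.rank = k)
    (Ω : Matrix (Fin n) (Fin n) ℝ) (hΩ : Ω.PosDef)
    (K : Matrix (Fin k) (Fin k) ℝ) (hK : K.PosSemidef) (hKnot : K.rank < k) :
    ¬ ∃ G : Matrix (Fin k) (Fin k) ℝ,
      X = (Ω + X * K * Xᵀ) * (K * Xᵀ * (Ω + X * K * Xᵀ)⁻¹)ᵀ * G :=
  stmt_3_general X hX Ω hΩ K hK hKnot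
end

section
/- Let X be an n×k real matrix of rank k, Ω an n×n positive definite matrix, K a k×k positive semidefinite matrix, and F = K[(X^T Ω^{-1} X)^{-1} + K]^{-1} (X^T Ω^{-1} X)^{-1} X^T Ω^{-1}. Then the column space of F Ω is contained in the column space of F X. (Linear completeness of the Bayes linear estimator.) -/
/-!
Write `F = B P` with `B = K ((Xᵀ Ω⁻¹ X)⁻¹ + K)⁻¹` and `P = (Xᵀ Ω⁻¹ X)⁻¹ Xᵀ Ω⁻¹` the generalized least
squares coefficient map. Full column rank of `X` makes `Xᵀ Ω⁻¹ X` positive definite, so `P X = 1`;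
hence `G = (Xᵀ Ω⁻¹ X)⁻¹ Xᵀ` gives `F X G = B G = B P Ω = F Ω`.
-/

open Matrix

theorem Matrix.mulVec_injective_of_rank_eq_card {K m n : Type*} [Field K] [Fintype m]
    [Fintype n] {A : Matrix m n K} (hA : A.rank = Fintype.card n) :
    Function.Injective A.mulVec := by
  have h := LinearMap.finrank_range_add_finrank_ker A.mulVecLin
  rw [← Matrix.rank, hA, Module.finrank_fintype_fun_eq_card, add_eq_left,
    Submodule.finrank_eq_zero, LinearMap.ker_eq_bot] at h
  exact h

theorem Matrix.PosDef.transpose_mul_inv_mul_same {m n : Type*} [Fintype m] [Fintype n]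
    [DecidableEq m] {Ω : Matrix m m ℝ} (hΩ : Ω.PosDef) {X : Matrix m n ℝ}
    (hX : Function.Injective X.mulVec) : (Xᵀ * Ω⁻¹ * X).PosDef := by
  simpa using hΩ.inv.conjTranspose_mul_mul_same hX

theorem Matrix.gls_mul_self {R m n : Type*} [CommRing R] [Fintype m] [Fintype n]
    [DecidableEq m] [DecidableEq n] (X : Matrix m n R) (Ω : Matrix m m R)
    (h : IsUnit (Xᵀ * Ω⁻¹ * X).det) : (Xᵀ * Ω⁻¹ * X)⁻¹ * Xᵀ * Ω⁻¹ * X = 1 := by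
  simpa only [Matrix.mul_assoc] using nonsing_inv_mul _ h

theorem stmt_4_general {n k : ℕ}
    (X : Matrix (Fin n) (Fin k) ℝ) (hX : X.rank = k)
    (Ω : Matrix (Fin n) (Fin n) ℝ) (hΩ : Ω.PosDef)
    (K : Matrix (Fin k) (Fin k) ℝ)
    (F : Matrix (Fin k) (Fin n) ℝ)
    (hF : F = K * ((Xᵀ * Ω⁻¹ * X)⁻¹ + K)⁻¹ * (Xᵀ * Ω⁻¹ * X)⁻¹ * Xᵀ * Ω⁻¹) :
    ∃ G : Matrix (Fin k) (Fin n) ℝ, F * Ω = F * X * G := by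
  have hA : (Xᵀ * Ω⁻¹ * X).PosDef :=
    hΩ.transpose_mul_inv_mul_same (mulVec_injective_of_rank_eq_card (by simpa using hX))
  have hP := gls_mul_self X Ω ((isUnit_iff_isUnit_det _).mp hA.isUnit)
  have hΩΩ : Ω⁻¹ * Ω = 1 := nonsing_inv_mul Ω ((isUnit_iff_isUnit_det _).mp hΩ.isUnit)
  refine ⟨(Xᵀ * Ω⁻¹ * X)⁻¹ * Xᵀ, ?_⟩
  set B := K * ((Xᵀ * Ω⁻¹ * X)⁻¹ + K)⁻¹
  calc F * Ω = B * (Xᵀ * Ω⁻¹ * X)⁻¹ * Xᵀ * (Ω⁻¹ * Ω) := by rw [hF]; simp only [Matrix.mul_assoc]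
    _ = B * ((Xᵀ * Ω⁻¹ * X)⁻¹ * Xᵀ * Ω⁻¹ * X) * ((Xᵀ * Ω⁻¹ * X)⁻¹ * Xᵀ) := by
      rw [hP, hΩΩ, Matrix.mul_one, Matrix.mul_one, Matrix.mul_assoc]
    _ = F * X * ((Xᵀ * Ω⁻¹ * X)⁻¹ * Xᵀ) := by rw [hF]; simp only [Matrix.mul_assoc]

theorem stmt_4 {n k : ℕ} (hnk : k < n)
    (X : Matrix (Fin n) (Fin k) ℝ) (hX : X.rank = k)
    (Ω : Matrix (Fin n) (Fin n) ℝ) (hΩ : Ω.PosDef)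
    (K : Matrix (Fin k) (Fin k) ℝ) (hK : K.PosSemidef)
    (F : Matrix (Fin k) (Fin n) ℝ)
    (hF : F = K * ((Xᵀ * Ω⁻¹ * X)⁻¹ + K)⁻¹ * (Xᵀ * Ω⁻¹ * X)⁻¹ * Xᵀ * Ω⁻¹) :
    ∃ G : Matrix (Fin k) (Fin n) ℝ, F * Ω = F * X * G :=
  stmt_4_general X hX Ω hΩ K F hF
end

section
/- Let X be an n×k real matrix of rank k, Ω an n×n positive definite matrix, and K₁, K₂ k×k positive semidefinite matrices. Then K₁ X^T (Ω + X K₁ X^T)^{-1} = K₂ X^T (I_n + X K₂ X^T)^{-1} holds (i.e., the two Bayes linear estimators coincide for all y ∈ ℝⁿ) if and only if Ω X K₂ = X K₁. -/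
/-!
By the push-through identity `K₂Xᵀ(1 + XK₂Xᵀ)⁻¹ = (1 + K₂XᵀX)⁻¹K₂Xᵀ`, where `1 + K₂XᵀX` is
invertible because its determinant equals `det (1 + XK₂Xᵀ) > 0` (Weinstein–Aronszajn), the
equation of the two estimators becomes, after clearing both inverses,
`(1 + K₂XᵀX) K₁Xᵀ = K₂Xᵀ(Ω + XK₁Xᵀ)`. The terms `K₂XᵀXK₁Xᵀ` cancel, leaving `K₁Xᵀ = K₂XᵀΩ`,
which is the transpose of `ΩXK₂ = XK₁`.
-/

open Matrix

namespace Matrix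

variable {m n R : Type*} [Fintype m] [Fintype n] [DecidableEq m] [DecidableEq n] [CommRing R]

theorem mul_nonsing_inv_eq_nonsing_inv_mul_iff {A : Matrix n n R} {C : Matrix m m R}
    (hA : IsUnit A.det) (hC : IsUnit C.det) (L M : Matrix m n R) :
    L * A⁻¹ = C⁻¹ * M ↔ C * L = M * A := by
  let := invertibleOfIsUnitDet A hA
  let := invertibleOfIsUnitDet C hC
  rw [mul_inv_eq_iff_eq_mul_of_invertible, Matrix.mul_assoc, eq_comm,
    inv_mul_eq_iff_eq_mul_of_invertible, eq_comm]

theorem mul_nonsing_inv_one_add_mul_comm (A : Matrix m n R) (B : Matrix n m R)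
    (h : IsUnit (1 + B * A).det) : A * (1 + B * A)⁻¹ = (1 + A * B)⁻¹ * A := by
  rw [mul_nonsing_inv_eq_nonsing_inv_mul_iff h (det_one_add_mul_comm A B ▸ h)]
  simp only [Matrix.add_mul, Matrix.mul_add, Matrix.one_mul, Matrix.mul_one, Matrix.mul_assoc]

end Matrix

theorem stmt_5_general {n k : ℕ}
    (X : Matrix (Fin n) (Fin k) ℝ)
    (Ω : Matrix (Fin n) (Fin n) ℝ) (hΩ : Ω.PosDef)
    (K₁ K₂ : Matrix (Fin k) (Fin k) ℝ) (hK₁ : K₁.PosSemidef) (hK₂ : K₂.PosSemidef) :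
    K₁ * Xᵀ * (Ω + X * K₁ * Xᵀ)⁻¹ = K₂ * Xᵀ * (1 + X * K₂ * Xᵀ)⁻¹ ↔
      Ω * X * K₂ = X * K₁ := by
  have hA : (Ω + X * K₁ * Xᵀ).PosDef :=
    hΩ.add_posSemidef (by simpa using hK₁.mul_mul_conjTranspose_same X)
  have hB : (1 + X * K₂ * Xᵀ).PosDef :=
    PosDef.one.add_posSemidef (by simpa using hK₂.mul_mul_conjTranspose_same X)
  have hB' : IsUnit (1 + X * (K₂ * Xᵀ)).det := by
    simpa only [Matrix.mul_assoc] using hB.det_pos.ne'.isUnit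
  rw [Matrix.mul_assoc X K₂, mul_nonsing_inv_one_add_mul_comm (K₂ * Xᵀ) X hB',
    mul_nonsing_inv_eq_nonsing_inv_mul_iff hA.det_pos.ne'.isUnit
      (det_one_add_mul_comm (K₂ * Xᵀ) X ▸ hB')]
  have hΩs : Ωᵀ = Ω := hΩ.isHermitian
  have hK₁s : K₁ᵀ = K₁ := hK₁.isHermitian
  have hK₂s : K₂ᵀ = K₂ := hK₂.isHermitian
  calc (1 + K₂ * Xᵀ * X) * (K₁ * Xᵀ) = K₂ * Xᵀ * (Ω + X * K₁ * Xᵀ)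
        ↔ K₁ * Xᵀ = K₂ * Xᵀ * Ω := by
        simp only [Matrix.add_mul, Matrix.mul_add, Matrix.one_mul, Matrix.mul_assoc,
          add_left_inj]
    _ ↔ (K₂ * Xᵀ * Ω)ᵀ = (K₁ * Xᵀ)ᵀ := by rw [transpose_inj, eq_comm]
    _ ↔ Ω * X * K₂ = X * K₁ := by
        simp only [transpose_mul, transpose_transpose, hΩs, hK₁s, hK₂s, Matrix.mul_assoc]

theorem stmt_5 {n k : ℕ} (hnk : k < n)
    (X : Matrix (Fin n) (Fin k) ℝ) (hX : X.rank = k)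
    (Ω : Matrix (Fin n) (Fin n) ℝ) (hΩ : Ω.PosDef)
    (K₁ K₂ : Matrix (Fin k) (Fin k) ℝ) (hK₁ : K₁.PosSemidef) (hK₂ : K₂.PosSemidef) :
    K₁ * Xᵀ * (Ω + X * K₁ * Xᵀ)⁻¹ = K₂ * Xᵀ * (1 + X * K₂ * Xᵀ)⁻¹ ↔
      Ω * X * K₂ = X * K₁ :=
  stmt_5_general X Ω hΩ K₁ K₂ hK₁ hK₂
end

section
/- Let X be an n×k real matrix of rank k, Z an n×(n−k) matrix with X^T Z = 0 and rank(Z) = n−k, and write Ω = X Γ X^T + X Ξ Z^T + Z Ξ^T X^T + Z Δ Z^T with Γ ∈ S^+(k), Δ ∈ S^+(n−k), Ξ a k×(n−k) matrix, and Ω positive definite. For positive semidefinite k×k matrices K₁, K₂, the equality Ω X K₂ = X K₁ holds if and only if K₂ X^T X Γ = K₁ and K₂ X^T X Ξ = 0. -/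
open Matrix

lemma isUnit_of_rank_eq_card {k : ℕ} (A : Matrix (Fin k) (Fin k) ℝ) (h : A.rank = k) :
    IsUnit A := by
  rw [← Matrix.mulVec_surjective_iff_isUnit]
  have hr : LinearMap.range A.mulVecLin = ⊤ := by
    apply Submodule.eq_top_of_finrank_eq
    rw [show Module.finrank ℝ ↥(LinearMap.range A.mulVecLin) = A.rank from rfl, h]
    simp
  intro v
  obtain ⟨w, hw⟩ := LinearMap.range_eq_top.mp hr v
  exact ⟨w, hw⟩

theorem stmt_6 {n k : ℕ} (hnk : k < n)
    (X : Matrix (Fin n) (Fin k) ℝ) (hX : X.rank = k)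
    (Z : Matrix (Fin n) (Fin (n - k)) ℝ) (hXZ : Xᵀ * Z = 0) (hZ : Z.rank = n - k)
    (Γ : Matrix (Fin k) (Fin k) ℝ) (hΓ : Γ.PosDef)
    (Δ : Matrix (Fin (n - k)) (Fin (n - k)) ℝ) (hΔ : Δ.PosDef)
    (Ξ : Matrix (Fin k) (Fin (n - k)) ℝ)
    (Ω : Matrix (Fin n) (Fin n) ℝ)
    (hΩrep : Ω = X * Γ * Xᵀ + X * Ξ * Zᵀ + Z * Ξᵀ * Xᵀ + Z * Δ * Zᵀ)
    (hΩ : Ω.PosDef)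
    (K₁ K₂ : Matrix (Fin k) (Fin k) ℝ) (hK₁ : K₁.PosSemidef) (hK₂ : K₂.PosSemidef) :
    Ω * X * K₂ = X * K₁ ↔ (K₂ * Xᵀ * X * Γ = K₁ ∧ K₂ * Xᵀ * X * Ξ = 0) := by
  have hZX : Zᵀ * X = 0 := by
    have := congrArg Matrix.transpose hXZ
    simpa [Matrix.transpose_mul] using this
  -- symmetry facts
  have hΓs : Γᵀ = Γ := by
    have := hΓ.isHermitian
    rwa [Matrix.IsHermitian, conjTranspose_eq_transpose_of_trivial] at this
  have hK₁s : K₁ᵀ = K₁ := by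
    have := hK₁.isHermitian
    rwa [Matrix.IsHermitian, conjTranspose_eq_transpose_of_trivial] at this
  have hK₂s : K₂ᵀ = K₂ := by
    have := hK₂.isHermitian
    rwa [Matrix.IsHermitian, conjTranspose_eq_transpose_of_trivial] at this
  -- invertibility of XᵀX and ZᵀZ
  have hXXr : (Xᵀ * X).rank = k := by rw [Matrix.rank_transpose_mul_self, hX]
  have hZZr : (Zᵀ * Z).rank = n - k := by rw [Matrix.rank_transpose_mul_self, hZ]
  have hXXu : IsUnit (Xᵀ * X) := isUnit_of_rank_eq_card _ hXXr
  have hZZu : IsUnit (Zᵀ * Z) := isUnit_of_rank_eq_card _ hZZr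
  have hXXdet : IsUnit (Xᵀ * X).det := (Matrix.isUnit_iff_isUnit_det _).mp hXXu
  have hZZdet : IsUnit (Zᵀ * Z).det := (Matrix.isUnit_iff_isUnit_det _).mp hZZu
  have hΩX : Ω * X = X * (Γ * (Xᵀ * X)) + Z * (Ξᵀ * (Xᵀ * X)) := by
    rw [hΩrep]
    simp only [Matrix.add_mul]
    rw [show X * Ξ * Zᵀ * X = X * Ξ * (Zᵀ * X) from Matrix.mul_assoc _ _ _,
        show Z * Δ * Zᵀ * X = Z * Δ * (Zᵀ * X) from Matrix.mul_assoc _ _ _, hZX]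
    simp [Matrix.mul_assoc]
  constructor
  · intro h
    -- rewrite h
    have h' : X * (Γ * (Xᵀ * X) * K₂) + Z * (Ξᵀ * (Xᵀ * X) * K₂) = X * K₁ := by
      rw [← h, hΩX]; simp [Matrix.add_mul, Matrix.mul_assoc]
    have hx : (Xᵀ * X) * (Γ * (Xᵀ * X) * K₂) = (Xᵀ * X) * K₁ := by
      have := congrArg (fun M => Xᵀ * M) h'
      simp only [Matrix.mul_add, ← Matrix.mul_assoc] at this ⊢
      rw [show Xᵀ * Z = 0 from hXZ] at this
      simpa [Matrix.mul_assoc] using this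
    have hz : (Zᵀ * Z) * (Ξᵀ * (Xᵀ * X) * K₂) = 0 := by
      have := congrArg (fun M => Zᵀ * M) h'
      simp only [Matrix.mul_add, ← Matrix.mul_assoc] at this
      rw [show Zᵀ * X = 0 from hZX] at this
      simpa [Matrix.mul_assoc] using this
    have h1 : Γ * (Xᵀ * X) * K₂ = K₁ := by
      have := congrArg (fun M => (Xᵀ * X)⁻¹ * M) hx
      simpa [← Matrix.mul_assoc, Matrix.nonsing_inv_mul _ hXXdet] using this
    have h2 : Ξᵀ * (Xᵀ * X) * K₂ = 0 := by
      have := congrArg (fun M => (Zᵀ * Z)⁻¹ * M) hz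
      simpa [← Matrix.mul_assoc, Matrix.nonsing_inv_mul _ hZZdet] using this
    constructor
    · have := congrArg Matrix.transpose h1
      simpa [Matrix.transpose_mul, hΓs, hK₁s, hK₂s, Matrix.mul_assoc] using this
    · have := congrArg Matrix.transpose h2
      simpa [Matrix.transpose_mul, hK₂s, Matrix.mul_assoc] using this
  · rintro ⟨h1, h2⟩
    have h1' : Γ * (Xᵀ * X) * K₂ = K₁ := by
      have := congrArg Matrix.transpose h1
      simpa [Matrix.transpose_mul, hΓs, hK₁s, hK₂s, Matrix.mul_assoc] using this
    have h2' : Ξᵀ * (Xᵀ * X) * K₂ = 0 := by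
      have := congrArg Matrix.transpose h2
      simpa [Matrix.transpose_mul, hK₂s, Matrix.mul_assoc] using this
    calc Ω * X * K₂ = X * (Γ * (Xᵀ * X) * K₂) + Z * (Ξᵀ * (Xᵀ * X) * K₂) := by
          rw [hΩX]; simp [Matrix.add_mul, Matrix.mul_assoc]
      _ = X * K₁ := by rw [h1', h2']; simp
end

section
/- Let X be n×k of rank k, Z be n×(n−k) with X^T Z = 0 and rank n−k, and suppose Ω = X Γ X^T + Z Δ Z^T with Γ positive definite and Δ positive definite (Rao's covariance structure). Then X^T Ω^{-1} X = Γ^{-1}, and equivalently X^T Ω Z = 0 and X^T Ω^{-1} Z = 0. -/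
/-!
Since `Xᵀ Z = 0`, left multiplication by `Xᵀ` kills the `Z Δ Zᵀ` part of `Ω`, so
`Xᵀ Ω = (Xᵀ X Γ) Xᵀ`. The matrix `Xᵀ X Γ` is invertible (full column rank of `X`, `Γ > 0`), and
inverting both sides gives `Xᵀ Ω⁻¹ = Γ⁻¹ (Xᵀ X)⁻¹ Xᵀ`. Multiplying these two identities on the
right by `X` and by `Z` yields the three claims.
-/

open Matrix

namespace Matrix

variable {m n R : Type*} [Fintype m] [Fintype n] [DecidableEq n]

theorem isUnit_of_rank_eq_card [Field R] {A : Matrix n n R} (h : A.rank = Fintype.card n) :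
    IsUnit A := by
  rw [← mulVec_injective_iff_isUnit]
  have hsurj : Function.Surjective A.mulVecLin := by
    rw [← LinearMap.range_eq_top]
    apply Submodule.eq_top_of_finrank_eq
    simpa [rank] using h
  exact LinearMap.injective_iff_surjective.mpr hsurj

theorem isUnit_transpose_mul_self_of_rank_eq_card [Field R] [LinearOrder R]
    [IsStrictOrderedRing R] {A : Matrix m n R} (h : A.rank = Fintype.card n) :
    IsUnit (Aᵀ * A) :=
  isUnit_of_rank_eq_card (by rw [rank_transpose_mul_self, h])

theorem mul_nonsing_inv_eq_of_mul_eq [DecidableEq m] [CommRing R] {A : Matrix n n R}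
    {G : Matrix m m R} {P : Matrix m n R} (hA : IsUnit A) (hG : IsUnit G)
    (h : P * A = G * P) : P * A⁻¹ = G⁻¹ * P := by
  have hA' := (isUnit_iff_isUnit_det A).mp hA
  have hG' := (isUnit_iff_isUnit_det G).mp hG
  calc P * A⁻¹ = G⁻¹ * (G * P) * A⁻¹ := by rw [← Matrix.mul_assoc, nonsing_inv_mul _ hG', Matrix.one_mul]
    _ = G⁻¹ * (P * A * A⁻¹) := by rw [← h, Matrix.mul_assoc]
    _ = G⁻¹ * P := by rw [Matrix.mul_assoc, mul_nonsing_inv _ hA', Matrix.mul_one]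

end Matrix

theorem stmt_8_general {n k : ℕ}
    (X : Matrix (Fin n) (Fin k) ℝ) (hX : X.rank = k)
    (Z : Matrix (Fin n) (Fin (n - k)) ℝ) (hXZ : Xᵀ * Z = 0)
    (Γ : Matrix (Fin k) (Fin k) ℝ) (hΓ : Γ.PosDef)
    (Δ : Matrix (Fin (n - k)) (Fin (n - k)) ℝ)
    (Ω : Matrix (Fin n) (Fin n) ℝ) (hΩrep : Ω = X * Γ * Xᵀ + Z * Δ * Zᵀ)
    (hΩ : Ω.PosDef) :
    Xᵀ * Ω⁻¹ * X = Γ⁻¹ ∧ Xᵀ * Ω * Z = 0 ∧ Xᵀ * Ω⁻¹ * Z = 0 := by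
  have hXX : IsUnit (Xᵀ * X) :=
    isUnit_transpose_mul_self_of_rank_eq_card (by rw [hX, Fintype.card_fin])
  have hXΩ : Xᵀ * Ω = Xᵀ * X * Γ * Xᵀ := by
    simp only [hΩrep, Matrix.mul_add, ← Matrix.mul_assoc, hXZ, Matrix.zero_mul, add_zero]
  have hXΩinv : Xᵀ * Ω⁻¹ = Γ⁻¹ * (Xᵀ * X)⁻¹ * Xᵀ := by
    rw [mul_nonsing_inv_eq_of_mul_eq hΩ.isUnit (hXX.mul hΓ.isUnit) hXΩ, Matrix.mul_inv_rev]
  refine ⟨?_, ?_, ?_⟩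
  · rw [hXΩinv, Matrix.mul_assoc, Matrix.mul_assoc,
      nonsing_inv_mul _ ((isUnit_iff_isUnit_det _).mp hXX), Matrix.mul_one]
  · rw [hXΩ, Matrix.mul_assoc, hXZ, Matrix.mul_zero]
  · rw [hXΩinv, Matrix.mul_assoc, hXZ, Matrix.mul_zero]

theorem stmt_8 {n k : ℕ} (hnk : k < n)
    (X : Matrix (Fin n) (Fin k) ℝ) (hX : X.rank = k)
    (Z : Matrix (Fin n) (Fin (n - k)) ℝ) (hXZ : Xᵀ * Z = 0) (hZ : Z.rank = n - k)
    (Γ : Matrix (Fin k) (Fin k) ℝ) (hΓ : Γ.PosDef)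
    (Δ : Matrix (Fin (n - k)) (Fin (n - k)) ℝ) (hΔ : Δ.PosDef)
    (Ω : Matrix (Fin n) (Fin n) ℝ) (hΩrep : Ω = X * Γ * Xᵀ + Z * Δ * Zᵀ)
    (hΩ : Ω.PosDef) :
    Xᵀ * Ω⁻¹ * X = Γ⁻¹ ∧ Xᵀ * Ω * Z = 0 ∧ Xᵀ * Ω⁻¹ * Z = 0 :=
  stmt_8_general X hX Z hXZ Γ hΓ Δ Ω hΩrep hΩ
end

section
/- Let X be an n×k real matrix of rank k and K₁, K₂ k×k positive definite matrices, and Ω an n×n positive definite matrix. The equality K₁ X^T (Ω + X K₁ X^T)^{-1} = K₂ X^T (I_n + X K₂ X^T)^{-1} holds if and only if X = Ω X K₂ K₁^{-1}. -/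
/-! Write `A = Ω + X K₁ Xᵀ` and `B = 1 + X K₂ Xᵀ`, both positive definite. Since `X` has full
column rank, left multiplication by `X` is injective, so the equation is equivalent to
`X K₁ Xᵀ A⁻¹ = X K₂ Xᵀ B⁻¹`, that is `1 - Ω A⁻¹ = 1 - B⁻¹`, that is `A = B Ω`, that is
`X K₁ Xᵀ = X K₂ Xᵀ Ω`. Cancelling `X` once more and transposing gives `X K₁ = Ω X K₂`. -/

open Matrix

namespace Matrix

section Rank

variable {m n p K : Type*} [Fintype n] [Field K]

theorem mulVec_injective_of_rank_eq_card_s11 {X : Matrix m n K} (hX : X.rank = Fintype.card n) :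
    Function.Injective X.mulVec := by
  have h := LinearMap.finrank_range_add_finrank_ker X.mulVecLin
  rw [show Module.finrank K (LinearMap.range X.mulVecLin) = Fintype.card n from hX,
    Module.finrank_fintype_fun_eq_card, add_eq_left] at h
  exact LinearMap.ker_eq_bot.mp (Submodule.finrank_eq_zero.mp h)

theorem mul_right_injective_of_rank_eq_card {X : Matrix m n K} (hX : X.rank = Fintype.card n) :
    Function.Injective (X * · : Matrix n p K → Matrix m p K) := fun M N h =>
  Matrix.ext fun i j => congrFun (mulVec_injective_of_rank_eq_card_s11 hX
    (congrFun (congrArg transpose h) j : X *ᵥ Mᵀ j = X *ᵥ Nᵀ j)) i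

end Rank

section Inverse

variable {n R : Type*} [Fintype n] [DecidableEq n] [CommRing R]

theorem mul_inv_add_eq_one_sub (A B : Matrix n n R) [Invertible (A + B)] :
    B * (A + B)⁻¹ = 1 - A * (A + B)⁻¹ := by
  rw [eq_sub_iff_add_eq, ← add_mul, add_comm, mul_inv_of_invertible]

theorem mul_inv_eq_inv_iff (C : Matrix n n R) {A B : Matrix n n R} [Invertible A]
    [Invertible B] : C * A⁻¹ = B⁻¹ ↔ A = B * C := by
  rw [mul_inv_eq_iff_eq_mul_of_invertible, eq_comm, inv_mul_eq_iff_eq_mul_of_invertible]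

end Inverse

theorem PosSemidef.mul_mul_transpose_same {m n R : Type*} [Fintype n] [Finite m] [CommRing R]
    [PartialOrder R] [StarRing R] [TrivialStar R] {K : Matrix n n R} (hK : K.PosSemidef)
    (X : Matrix m n R) : (X * K * Xᵀ).PosSemidef := by
  simpa using hK.mul_mul_conjTranspose_same X

end Matrix

theorem stmt_11_general {n k : ℕ}
    (X : Matrix (Fin n) (Fin k) ℝ) (hX : X.rank = k)
    (Ω : Matrix (Fin n) (Fin n) ℝ) (hΩ : Ω.PosDef)
    (K₁ K₂ : Matrix (Fin k) (Fin k) ℝ) (hK₁ : K₁.PosDef) (hK₂ : K₂.PosDef) :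
    K₁ * Xᵀ * (Ω + X * K₁ * Xᵀ)⁻¹ = K₂ * Xᵀ * (1 + X * K₂ * Xᵀ)⁻¹ ↔
      X = Ω * X * K₂ * K₁⁻¹ := by
  have hXcancel {p : Type} := mul_right_injective_of_rank_eq_card (p := p) (X := X)
    (hX.trans (Fintype.card_fin k).symm)
  have hΩt : Ωᵀ = Ω := by simpa using hΩ.isHermitian.eq
  have hK₁t : K₁ᵀ = K₁ := by simpa using hK₁.isHermitian.eq
  have hK₂t : K₂ᵀ = K₂ := by simpa using hK₂.isHermitian.eq
  let := (hΩ.add_posSemidef (hK₁.posSemidef.mul_mul_transpose_same X)).isUnit.invertible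
  let := (PosDef.one.add_posSemidef (hK₂.posSemidef.mul_mul_transpose_same X)).isUnit.invertible
  let := hK₁.isUnit.invertible
  calc _ ↔ X * (K₁ * Xᵀ * (Ω + X * K₁ * Xᵀ)⁻¹) = X * (K₂ * Xᵀ * (1 + X * K₂ * Xᵀ)⁻¹) :=
        hXcancel.eq_iff.symm
    _ ↔ 1 - Ω * (Ω + X * K₁ * Xᵀ)⁻¹ = 1 - 1 * (1 + X * K₂ * Xᵀ)⁻¹ := by
        simp only [← Matrix.mul_assoc, mul_inv_add_eq_one_sub]
    _ ↔ Ω * (Ω + X * K₁ * Xᵀ)⁻¹ = (1 + X * K₂ * Xᵀ)⁻¹ := by rw [sub_right_inj, Matrix.one_mul]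
    _ ↔ Ω + X * K₁ * Xᵀ = (1 + X * K₂ * Xᵀ) * Ω := mul_inv_eq_inv_iff Ω
    _ ↔ X * (K₁ * Xᵀ) = X * (K₂ * Xᵀ * Ω) := by
        simp only [Matrix.add_mul, Matrix.one_mul, add_right_inj, Matrix.mul_assoc]
    _ ↔ K₁ * Xᵀ = K₂ * Xᵀ * Ω := hXcancel.eq_iff
    _ ↔ X * K₁ = Ω * X * K₂ := by
        rw [← transpose_inj]
        simp only [transpose_mul, transpose_transpose, hΩt, hK₁t, hK₂t, Matrix.mul_assoc]
    _ ↔ X = Ω * X * K₂ * K₁⁻¹ := by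
        rw [eq_comm (a := X), mul_inv_eq_iff_eq_mul_of_invertible, eq_comm]

theorem stmt_11 {n k : ℕ} (hnk : k < n)
    (X : Matrix (Fin n) (Fin k) ℝ) (hX : X.rank = k)
    (Ω : Matrix (Fin n) (Fin n) ℝ) (hΩ : Ω.PosDef)
    (K₁ K₂ : Matrix (Fin k) (Fin k) ℝ) (hK₁ : K₁.PosDef) (hK₂ : K₂.PosDef) :
    K₁ * Xᵀ * (Ω + X * K₁ * Xᵀ)⁻¹ = K₂ * Xᵀ * (1 + X * K₂ * Xᵀ)⁻¹ ↔
      X = Ω * X * K₂ * K₁⁻¹ :=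
  stmt_11_general X hX Ω hΩ K₁ K₂ hK₁ hK₂
end

section
/- Let X be n×k of rank k, Ω n×n positive definite of Rao's form Ω = X Γ X^T + Z Δ Z^T with Γ, Δ positive definite, and K₁, K₂ k×k positive definite. For y ∈ ℝⁿ, the equality K₁ X^T (Ω + X K₁ X^T)^{-1} y = K₂ X^T (I_n + X K₂ X^T)^{-1} y holds if and only if y ∈ { C(X) ∩ N[(K₂ X^T Ω − K₁ X^T)(Ω + X K₁ X^T)^{-1}] } ⊕ C(X)^⊥, where C denotes column space and N denotes null space. -/
/-!
Write `P = Ω + X K₁ Xᵀ` and `Q = I + X K₂ Xᵀ`. Using only `(I + K₂ XᵀX) K₂ Xᵀ = K₂ Xᵀ Q`, one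
checks `(K₂ Xᵀ Ω - K₁ Xᵀ) P⁻¹ = (I + K₂ XᵀX) (K₂ Xᵀ Q⁻¹ - K₁ Xᵀ P⁻¹)`, and `I + K₂ XᵀX` is
invertible because its determinant equals `det Q`. So the two sides agree at `y` exactly when
`M = (K₂ Xᵀ Ω - K₁ Xᵀ) P⁻¹` kills `y`.

Rao's form gives `Xᵀ P = XᵀX (Γ + K₁) Xᵀ` and `K₂ Xᵀ Ω = K₂ XᵀX Γ Xᵀ`: `P` leaves `C(X)^⊥ = N(Xᵀ)`
invariant, hence (by finite dimensionality) so does `P⁻¹`, and therefore `C(X)^⊥ ≤ N(M)`. Since `C(X) ⊕ C(X)^⊥ = ℝⁿ`, the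
modular law turns `(C(X) ∩ N(M)) ⊕ C(X)^⊥` into `N(M)`.
-/

open Matrix

namespace Matrix

open LinearMap

variable {l m n : Type*} [Fintype m] [Fintype n]

section CommRing

variable {R : Type*} [CommRing R]

theorem transpose_mul_rao [Fintype l] (X : Matrix n m R) (Z : Matrix n l R) (Γ : Matrix m m R)
    (Δ : Matrix l l R) (hXZ : Xᵀ * Z = 0) :
    Xᵀ * (X * Γ * Xᵀ + Z * Δ * Zᵀ) = Xᵀ * X * Γ * Xᵀ := by
  rw [Matrix.mul_add, ← Matrix.mul_assoc, ← Matrix.mul_assoc, ← Matrix.mul_assoc,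
    ← Matrix.mul_assoc, hXZ, Matrix.zero_mul, Matrix.zero_mul, add_zero]

theorem sub_mul_inv_eq_one_add_mul_mul_sub [DecidableEq m] [DecidableEq n] (X : Matrix n m R)
    (Ω : Matrix n n R) (K₁ K₂ : Matrix m m R) (hP : IsUnit (Ω + X * K₁ * Xᵀ).det)
    (hQ : IsUnit (1 + X * K₂ * Xᵀ).det) :
    (K₂ * Xᵀ * Ω - K₁ * Xᵀ) * (Ω + X * K₁ * Xᵀ)⁻¹ = (1 + K₂ * Xᵀ * X) *
      (K₂ * Xᵀ * (1 + X * K₂ * Xᵀ)⁻¹ - K₁ * Xᵀ * (Ω + X * K₁ * Xᵀ)⁻¹) := by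
  have push : (1 + K₂ * Xᵀ * X) * (K₂ * Xᵀ) = K₂ * Xᵀ * (1 + X * K₂ * Xᵀ) := by
    simp only [Matrix.mul_add, Matrix.add_mul, Matrix.mul_assoc, Matrix.one_mul, Matrix.mul_one]
  have hKX : K₂ * Xᵀ = K₂ * Xᵀ * (Ω + X * K₁ * Xᵀ) * (Ω + X * K₁ * Xᵀ)⁻¹ := by
    rw [Matrix.mul_assoc _ (Ω + _), mul_nonsing_inv _ hP, Matrix.mul_one]
  rw [Matrix.mul_sub, ← Matrix.mul_assoc, push, Matrix.mul_assoc (K₂ * Xᵀ), mul_nonsing_inv _ hQ,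
    Matrix.mul_one]
  nth_rewrite 2 [hKX]
  rw [← Matrix.mul_assoc (1 + _), ← Matrix.sub_mul]
  congr 1
  simp only [Matrix.mul_add, Matrix.add_mul, Matrix.mul_assoc, Matrix.one_mul]
  abel

end CommRing

section Field

variable {K : Type*} [Field K]

theorem mulVec_eq_mulVec_iff_sub_mul_inv_mulVec_eq_zero [DecidableEq m] [DecidableEq n]
    (X : Matrix n m K) (Ω : Matrix n n K) (K₁ K₂ : Matrix m m K)
    (hP : IsUnit (Ω + X * K₁ * Xᵀ).det) (hQ : IsUnit (1 + X * K₂ * Xᵀ).det) (y : n → K) :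
    (K₁ * Xᵀ * (Ω + X * K₁ * Xᵀ)⁻¹) *ᵥ y = (K₂ * Xᵀ * (1 + X * K₂ * Xᵀ)⁻¹) *ᵥ y ↔
      ((K₂ * Xᵀ * Ω - K₁ * Xᵀ) * (Ω + X * K₁ * Xᵀ)⁻¹) *ᵥ y = 0 := by
  have hT : IsUnit (1 + K₂ * Xᵀ * X) := by
    rwa [isUnit_iff_isUnit_det, det_one_add_mul_comm (K₂ * Xᵀ) X, ← Matrix.mul_assoc]
  rw [sub_mul_inv_eq_one_add_mul_mul_sub X Ω K₁ K₂ hP hQ, ← mulVec_mulVec _ (1 + _),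
    (mulVec_injective_iff_isUnit.mpr hT).eq_iff' (mulVec_zero _), sub_mulVec, sub_eq_zero,
    eq_comm]

theorem ker_le_ker_mul_nonsing_inv_of_mul_eq [DecidableEq n] {A : Matrix m n K}
    {P : Matrix n n K} {B : Matrix m m K} (hP : IsUnit P.det) (hAP : A * P = B * A) :
    ker A.mulVecLin ≤ ker (A * P⁻¹).mulVecLin := by
  have hmaps : ∀ w ∈ ker A.mulVecLin, P.mulVecLin w ∈ ker A.mulVecLin := fun w hw => by
    simp only [mem_ker, mulVecLin_apply] at hw ⊢
    rw [mulVec_mulVec, hAP, ← mulVec_mulVec, hw, mulVec_zero]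
  have hinj : Function.Injective (P.mulVecLin.restrict hmaps) := fun v w hvw =>
    Subtype.ext ((mulVec_injective_iff_isUnit.mpr ((isUnit_iff_isUnit_det P).mpr hP))
      (congrArg Subtype.val hvw))
  intro v hv
  obtain ⟨w, hw⟩ := injective_iff_surjective.mp hinj ⟨v, hv⟩
  have hPw : P *ᵥ w = v := congrArg Subtype.val hw
  rw [mem_ker, mulVecLin_apply, ← hPw, mulVec_mulVec, Matrix.mul_assoc, nonsing_inv_mul _ hP,
    Matrix.mul_one]
  exact w.2

theorem isCompl_range_mulVecLin_ker_transpose [LinearOrder K] [IsStrictOrderedRing K]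
    (A : Matrix m n K) : IsCompl (range A.mulVecLin) (ker Aᵀ.mulVecLin) := by
  have hdim : Module.finrank K (m → K) ≤
      Module.finrank K (range A.mulVecLin) + Module.finrank K (ker Aᵀ.mulVecLin) := by
    rw [← Aᵀ.mulVecLin.finrank_range_add_finrank_ker]
    exact (congrArg (· + _) (rank_transpose A)).le
  refine (Submodule.isCompl_iff_disjoint _ _ hdim).mpr (Submodule.disjoint_def.mpr ?_)
  rintro _ ⟨a, rfl⟩ h
  have ha : a ∈ ker (Aᵀ * A).mulVecLin := by simpa [← mulVec_mulVec] using h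
  rwa [ker_mulVecLin_transpose_mul_self] at ha

end Field

end Matrix

theorem stmt_15_general {n k : ℕ}
    (X : Matrix (Fin n) (Fin k) ℝ)
    (Z : Matrix (Fin n) (Fin (n - k)) ℝ) (hXZ : Xᵀ * Z = 0)
    (Γ : Matrix (Fin k) (Fin k) ℝ)
    (Δ : Matrix (Fin (n - k)) (Fin (n - k)) ℝ)
    (Ω : Matrix (Fin n) (Fin n) ℝ) (hΩrep : Ω = X * Γ * Xᵀ + Z * Δ * Zᵀ)
    (hΩ : Ω.PosDef)
    (K₁ K₂ : Matrix (Fin k) (Fin k) ℝ) (hK₁ : K₁.PosDef) (hK₂ : K₂.PosDef)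
    (y : Fin n → ℝ) :
    (K₁ * Xᵀ * (Ω + X * K₁ * Xᵀ)⁻¹) *ᵥ y = (K₂ * Xᵀ * (1 + X * K₂ * Xᵀ)⁻¹) *ᵥ y ↔
      y ∈ (LinearMap.range X.mulVecLin ⊓
              LinearMap.ker ((K₂ * Xᵀ * Ω - K₁ * Xᵀ) * (Ω + X * K₁ * Xᵀ)⁻¹).mulVecLin)
            ⊔ LinearMap.ker Xᵀ.mulVecLin := by
  have hP : (Ω + X * K₁ * Xᵀ).PosDef :=
    hΩ.add_posSemidef (by simpa using hK₁.posSemidef.mul_mul_conjTranspose_same X)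
  have hQ : (1 + X * K₂ * Xᵀ).PosDef :=
    PosDef.one.add_posSemidef (by simpa using hK₂.posSemidef.mul_mul_conjTranspose_same X)
  have hXP : Xᵀ * (Ω + X * K₁ * Xᵀ) = Xᵀ * X * (Γ + K₁) * Xᵀ := by
    rw [Matrix.mul_add, hΩrep, transpose_mul_rao X Z Γ Δ hXZ]
    simp only [Matrix.mul_add, Matrix.add_mul, Matrix.mul_assoc]
  have hM : K₂ * Xᵀ * Ω - K₁ * Xᵀ = (K₂ * Xᵀ * X * Γ - K₁) * Xᵀ := by
    rw [hΩrep, Matrix.mul_assoc K₂, transpose_mul_rao X Z Γ Δ hXZ]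
    simp only [Matrix.sub_mul, Matrix.mul_assoc]
  have hker : LinearMap.ker Xᵀ.mulVecLin ≤
      LinearMap.ker ((K₂ * Xᵀ * Ω - K₁ * Xᵀ) * (Ω + X * K₁ * Xᵀ)⁻¹).mulVecLin := by
    rw [hM, Matrix.mul_assoc, mulVecLin_mul]
    exact (ker_le_ker_mul_nonsing_inv_of_mul_eq hP.det_pos.ne'.isUnit hXP).trans
      (LinearMap.ker_le_ker_comp _ _)
  rw [inf_comm, inf_sup_assoc_of_le _ hker, (isCompl_range_mulVecLin_ker_transpose X).sup_eq_top,
    inf_top_eq, LinearMap.mem_ker, mulVecLin_apply]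
  exact mulVec_eq_mulVec_iff_sub_mul_inv_mulVec_eq_zero X Ω K₁ K₂ hP.det_pos.ne'.isUnit
    hQ.det_pos.ne'.isUnit y

theorem stmt_15 {n k : ℕ} (hnk : k < n)
    (X : Matrix (Fin n) (Fin k) ℝ) (hX : X.rank = k)
    (Z : Matrix (Fin n) (Fin (n - k)) ℝ) (hXZ : Xᵀ * Z = 0) (hZ : Z.rank = n - k)
    (Γ : Matrix (Fin k) (Fin k) ℝ) (hΓ : Γ.PosDef)
    (Δ : Matrix (Fin (n - k)) (Fin (n - k)) ℝ) (hΔ : Δ.PosDef)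
    (Ω : Matrix (Fin n) (Fin n) ℝ) (hΩrep : Ω = X * Γ * Xᵀ + Z * Δ * Zᵀ)
    (hΩ : Ω.PosDef)
    (K₁ K₂ : Matrix (Fin k) (Fin k) ℝ) (hK₁ : K₁.PosDef) (hK₂ : K₂.PosDef)
    (y : Fin n → ℝ) :
    (K₁ * Xᵀ * (Ω + X * K₁ * Xᵀ)⁻¹) *ᵥ y = (K₂ * Xᵀ * (1 + X * K₂ * Xᵀ)⁻¹) *ᵥ y ↔
      y ∈ (LinearMap.range X.mulVecLin ⊓
              LinearMap.ker ((K₂ * Xᵀ * Ω - K₁ * Xᵀ) * (Ω + X * K₁ * Xᵀ)⁻¹).mulVecLin)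
            ⊔ LinearMap.ker Xᵀ.mulVecLin :=
  stmt_15_general X Z hXZ Γ Δ Ω hΩrep hΩ K₁ K₂ hK₁ hK₂ y
end

section
/- Let X be n×k of rank k and ρ > 0, with K₁ = ρ (X^T Ω^{-1} X)^{-1} and K₂ = ρ (X^T X)^{-1}. Then the residual sums of squares of the two typical shrinkage Bayes linear estimators coincide for all y ∈ ℝⁿ, i.e. (Ω + X K₁ X^T)^{-1} Ω (Ω + X K₁ X^T)^{-1} = (I_n + X K₂ X^T)^{-2}, if and only if Ω = I_n. -/
open Matrix

/-! With `A = Ω + ρ X (XᵀΩ⁻¹X)⁻¹ Xᵀ` one has `A Ω⁻¹ X = (1 + ρ) X`, so the residual matrix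
`A⁻¹ Ω A⁻¹` maps `X` to `(1 + ρ)⁻² Ω⁻¹ X`, and for `Ω = 1` to `(1 + ρ)⁻² X`. Equality of the two
residual matrices therefore forces `Ω⁻¹ X = X`. Then `XᵀΩ⁻¹ = Xᵀ`, so `A = (1 + ρ X (XᵀX)⁻¹ Xᵀ) Ω`
and the first residual matrix is `Ω⁻¹` times the second, which is invertible; hence `Ω⁻¹ = 1`. -/

theorem Matrix.mulVec_injective_of_rank_eq_card_s17 {m k K : Type*} [Fintype k] [Field K]
    {X : Matrix m k K} (hX : X.rank = Fintype.card k) : Function.Injective X.mulVec := by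
  have h := X.mulVecLin.finrank_range_add_finrank_ker
  rw [← Matrix.rank, hX, Module.finrank_fintype_fun_eq_card] at h
  have hker : LinearMap.ker X.mulVecLin = ⊥ := Submodule.finrank_eq_zero.mp (by omega)
  exact LinearMap.ker_eq_bot.mp hker

section Shrinkage

variable {m k : Type*} [Fintype m] [DecidableEq m] [Fintype k]
  {Ω : Matrix m m ℝ} {X : Matrix m k ℝ} {ρ : ℝ}

theorem posDef_transpose_mul_inv_mul (hΩ : Ω.PosDef) (hX : Function.Injective X.mulVec) :
    (Xᵀ * Ω⁻¹ * X).PosDef := by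
  simpa [conjTranspose_eq_transpose_of_trivial] using hΩ.inv.conjTranspose_mul_mul_same hX

variable [DecidableEq k]

noncomputable def shrinkageMatrix (Ω : Matrix m m ℝ) (X : Matrix m k ℝ) (ρ : ℝ) :
    Matrix m m ℝ :=
  Ω + X * (ρ • (Xᵀ * Ω⁻¹ * X)⁻¹) * Xᵀ

noncomputable def residualMatrix (Ω : Matrix m m ℝ) (X : Matrix m k ℝ) (ρ : ℝ) :
    Matrix m m ℝ :=
  (shrinkageMatrix Ω X ρ)⁻¹ * Ω * (shrinkageMatrix Ω X ρ)⁻¹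

theorem posDef_shrinkageMatrix (hΩ : Ω.PosDef) (hX : Function.Injective X.mulVec)
    (hρ : 0 ≤ ρ) : (shrinkageMatrix Ω X ρ).PosDef := by
  have hK : (ρ • (Xᵀ * Ω⁻¹ * X)⁻¹).PosSemidef :=
    (posDef_transpose_mul_inv_mul hΩ hX).inv.posSemidef.smul hρ
  simpa [shrinkageMatrix, conjTranspose_eq_transpose_of_trivial, Matrix.mul_smul,
    Matrix.smul_mul] using hΩ.add_posSemidef (hK.mul_mul_conjTranspose_same X)

theorem shrinkageMatrix_mul_inv_mul (hΩ : Ω.PosDef) (hX : Function.Injective X.mulVec) :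
    shrinkageMatrix Ω X ρ * (Ω⁻¹ * X) = (1 + ρ) • X := by
  have hS : (Xᵀ * Ω⁻¹ * X)⁻¹ * (Xᵀ * Ω⁻¹ * X) = 1 :=
    nonsing_inv_mul _ (posDef_transpose_mul_inv_mul hΩ hX).det_pos.ne'.isUnit
  have hΩ' : Ω * Ω⁻¹ = 1 := mul_nonsing_inv _ hΩ.det_pos.ne'.isUnit
  calc shrinkageMatrix Ω X ρ * (Ω⁻¹ * X)
      = Ω * Ω⁻¹ * X + ρ • (X * ((Xᵀ * Ω⁻¹ * X)⁻¹ * (Xᵀ * Ω⁻¹ * X))) := by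
        simp only [shrinkageMatrix, Matrix.add_mul, Matrix.mul_assoc, Matrix.smul_mul,
          Matrix.mul_smul]
    _ = (1 + ρ) • X := by rw [hS, hΩ', Matrix.one_mul, Matrix.mul_one, add_smul, one_smul]

theorem inv_shrinkageMatrix_mul (hΩ : Ω.PosDef) (hX : Function.Injective X.mulVec)
    (hρ : 0 ≤ ρ) : (shrinkageMatrix Ω X ρ)⁻¹ * X = (1 + ρ)⁻¹ • (Ω⁻¹ * X) := by
  have hA := nonsing_inv_mul _ (posDef_shrinkageMatrix hΩ hX hρ).det_pos.ne'.isUnit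
  calc (shrinkageMatrix Ω X ρ)⁻¹ * X
      = (1 + ρ)⁻¹ • ((shrinkageMatrix Ω X ρ)⁻¹ * ((1 + ρ) • X)) := by
        rw [Matrix.mul_smul, smul_smul, inv_mul_cancel₀ (by positivity), one_smul]
    _ = (1 + ρ)⁻¹ • (Ω⁻¹ * X) := by
        rw [← shrinkageMatrix_mul_inv_mul hΩ hX, ← Matrix.mul_assoc, hA, Matrix.one_mul]

theorem residualMatrix_mul (hΩ : Ω.PosDef) (hX : Function.Injective X.mulVec) (hρ : 0 ≤ ρ) :
    residualMatrix Ω X ρ * X = ((1 + ρ) ^ 2)⁻¹ • (Ω⁻¹ * X) := by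
  have hΩ' : Ω * Ω⁻¹ = 1 := mul_nonsing_inv _ hΩ.det_pos.ne'.isUnit
  rw [residualMatrix, Matrix.mul_assoc, inv_shrinkageMatrix_mul hΩ hX hρ, Matrix.mul_smul,
    Matrix.mul_assoc, ← Matrix.mul_assoc Ω, hΩ', Matrix.one_mul, inv_shrinkageMatrix_mul hΩ hX hρ,
    smul_smul, ← mul_inv, sq]

theorem shrinkageMatrix_eq_mul_of_inv_mul_eq (hΩ : Ω.PosDef) (hfix : Ω⁻¹ * X = X) :
    shrinkageMatrix Ω X ρ = shrinkageMatrix 1 X ρ * Ω := by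
  have hdet : IsUnit Ω.det := hΩ.det_pos.ne'.isUnit
  have hΩT : Ωᵀ = Ω := by simpa [conjTranspose_eq_transpose_of_trivial] using hΩ.isHermitian.eq
  have hΩinvT : Ω⁻¹ᵀ = Ω⁻¹ := by rw [transpose_nonsing_inv, hΩT]
  have hXΩinv : Xᵀ * Ω⁻¹ = Xᵀ := by rw [← hΩinvT, ← transpose_mul, hfix]
  have hΩX : Ω * X = X := by
    conv_lhs => rw [← hfix]
    exact mul_nonsing_inv_cancel_left (h := hdet) ..
  have hXΩ : Xᵀ * Ω = Xᵀ := by rw [← hΩT, ← transpose_mul, hΩX]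
  rw [shrinkageMatrix, shrinkageMatrix, hXΩinv, inv_one, Matrix.mul_one, Matrix.add_mul,
    Matrix.one_mul, Matrix.mul_assoc _ Xᵀ, hXΩ]

theorem residualMatrix_eq_inv_mul_of_inv_mul_eq (hΩ : Ω.PosDef) (hfix : Ω⁻¹ * X = X) :
    residualMatrix Ω X ρ = Ω⁻¹ * residualMatrix 1 X ρ := by
  have hΩ' : Ω * Ω⁻¹ = 1 := mul_nonsing_inv _ hΩ.det_pos.ne'.isUnit
  rw [residualMatrix, residualMatrix, shrinkageMatrix_eq_mul_of_inv_mul_eq hΩ hfix,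
    Matrix.mul_inv_rev]
  simp only [Matrix.mul_assoc, Matrix.one_mul]
  rw [← Matrix.mul_assoc Ω, hΩ', Matrix.one_mul]

end Shrinkage

theorem stmt_17_general {n k : ℕ}
    (X : Matrix (Fin n) (Fin k) ℝ) (hX : X.rank = k)
    (Ω : Matrix (Fin n) (Fin n) ℝ) (hΩ : Ω.PosDef)
    (ρ : ℝ) (hρ : 0 < ρ)
    (K₁ K₂ : Matrix (Fin k) (Fin k) ℝ)
    (hK₁ : K₁ = ρ • (Xᵀ * Ω⁻¹ * X)⁻¹) (hK₂ : K₂ = ρ • (Xᵀ * X)⁻¹) :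
    (Ω + X * K₁ * Xᵀ)⁻¹ * Ω * (Ω + X * K₁ * Xᵀ)⁻¹ =
        (1 + X * K₂ * Xᵀ)⁻¹ * (1 + X * K₂ * Xᵀ)⁻¹ ↔ Ω = 1 := by
  subst hK₁ hK₂
  have hXinj := mulVec_injective_of_rank_eq_card_s17 (hX.trans (Fintype.card_fin k).symm)
  have hdet : IsUnit Ω.det := hΩ.det_pos.ne'.isUnit
  have hN : IsUnit (residualMatrix 1 X ρ) := by
    have := (posDef_shrinkageMatrix PosDef.one hXinj hρ.le).inv.isUnit
    exact (this.mul isUnit_one).mul this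
  change residualMatrix Ω X ρ = _ ↔ _
  rw [show (1 + X * (ρ • (Xᵀ * X)⁻¹) * Xᵀ)⁻¹ * (1 + X * (ρ • (Xᵀ * X)⁻¹) * Xᵀ)⁻¹ =
    residualMatrix 1 X ρ by simp [residualMatrix, shrinkageMatrix]]
  refine ⟨fun h => ?_, by rintro rfl; rfl⟩
  have hfix : Ω⁻¹ * X = X := by
    have hX' := congrArg (· * X) h
    simp only [residualMatrix_mul hΩ hXinj hρ.le, residualMatrix_mul PosDef.one hXinj hρ.le,
      inv_one, Matrix.one_mul] at hX'
    exact smul_right_injective _ (by positivity) hX'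
  rw [residualMatrix_eq_inv_mul_of_inv_mul_eq hΩ hfix, hN.mul_eq_right] at h
  rw [← nonsing_inv_nonsing_inv Ω hdet, h, inv_one]

theorem stmt_17 {n k : ℕ} (hnk : k < n)
    (X : Matrix (Fin n) (Fin k) ℝ) (hX : X.rank = k)
    (Ω : Matrix (Fin n) (Fin n) ℝ) (hΩ : Ω.PosDef)
    (ρ : ℝ) (hρ : 0 < ρ)
    (K₁ K₂ : Matrix (Fin k) (Fin k) ℝ)
    (hK₁ : K₁ = ρ • (Xᵀ * Ω⁻¹ * X)⁻¹) (hK₂ : K₂ = ρ • (Xᵀ * X)⁻¹) :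
    (Ω + X * K₁ * Xᵀ)⁻¹ * Ω * (Ω + X * K₁ * Xᵀ)⁻¹ =
        (1 + X * K₂ * Xᵀ)⁻¹ * (1 + X * K₂ * Xᵀ)⁻¹ ↔ Ω = 1 :=
  stmt_17_general X hX Ω hΩ ρ hρ K₁ K₂ hK₁ hK₂
end

section
/- Let X be n×k of rank k, Ω n×n positive definite, and K₁, K₂ k×k positive semidefinite. If both (i) K₁ X^T (Ω + X K₁ X^T)^{-1} = K₂ X^T (I_n + X K₂ X^T)^{-1} (the two Bayes linear estimators coincide for all y) and (ii) (Ω + X K₁ X^T)^{-1} Ω (Ω + X K₁ X^T)^{-1} = (I_n + X K₂ X^T)^{-2} (their residual sums of squares coincide for all y), then Ω = I_n and K₁ = K₂. Conversely, Ω = I_n and K₁ = K₂ trivially imply (i) and (ii). -/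
/-!
Put `A = Ω + X K₁ Xᵀ` and `B = I + X K₂ Xᵀ`. Multiplying (i) on the left by `X` gives
`(A - Ω) A⁻¹ = (B - I) B⁻¹`, i.e. `Ω A⁻¹ = B⁻¹`. Then (ii) reads `A⁻¹ B⁻¹ = B⁻¹ B⁻¹`, so `A = B`,
whence `Ω = B⁻¹ A = I` and `X K₁ Xᵀ = X K₂ Xᵀ`. Full column rank makes `X` left-cancellable,
so `K₁ = K₂`.
-/

open Matrix

namespace Matrix

variable {l m n R K : Type*}

theorem mulVec_injective_of_rank_eq_card_s19 [Field K] [Fintype m] [Fintype n] {A : Matrix m n K}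
    (hA : A.rank = Fintype.card n) : Function.Injective A.mulVec := by
  have hker : Module.finrank K (LinearMap.ker A.mulVecLin) = 0 := by
    have := A.mulVecLin.finrank_range_add_finrank_ker
    rw [← rank, hA, Module.finrank_fintype_fun_eq_card] at this
    omega
  rw [← coe_mulVecLin, ← LinearMap.ker_eq_bot]
  exact Submodule.finrank_eq_zero.mp hker

theorem mul_right_injective_of_injective_mulVec [CommSemiring R] [Fintype m] [Fintype n]
    {A : Matrix l m R} (hA : Function.Injective A.mulVec) :
    Function.Injective fun M : Matrix m n R => A * M := by
  intro M N h
  refine mulVec_injective (funext fun v => hA ?_)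
  simpa only [mulVec_mulVec] using congrArg (· *ᵥ v) h

theorem mul_mul_transpose_injective_of_injective_mulVec [CommSemiring R] [Fintype l] [Fintype m]
    {A : Matrix l m R} (hA : Function.Injective A.mulVec) :
    Function.Injective fun M : Matrix m m R => A * M * Aᵀ := by
  intro M N (h : A * M * Aᵀ = A * N * Aᵀ)
  have hl : M * Aᵀ = N * Aᵀ :=
    mul_right_injective_of_injective_mulVec hA (by simpa only [Matrix.mul_assoc] using h)
  have hr : A * Mᵀ = A * Nᵀ := by
    simpa only [transpose_mul, transpose_transpose] using congrArg transpose hl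
  exact transpose_injective (mul_right_injective_of_injective_mulVec hA hr)

theorem eq_one_and_eq_of_hat_eq_of_rss_eq [CommRing R] [Fintype m] [DecidableEq m]
    {Ω P Q : Matrix m m R} (hA : IsUnit (Ω + P).det) (hB : IsUnit (1 + Q).det)
    (hhat : P * (Ω + P)⁻¹ = Q * (1 + Q)⁻¹)
    (hrss : (Ω + P)⁻¹ * Ω * (Ω + P)⁻¹ = (1 + Q)⁻¹ * (1 + Q)⁻¹) :
    Ω = 1 ∧ P = Q := by
  set A := Ω + P with hAdef
  set B := 1 + Q with hBdef
  have hΩA : Ω * A⁻¹ = B⁻¹ := by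
    have hP : P = A - Ω := by rw [hAdef, add_sub_cancel_left]
    have hQ : Q = B - 1 := by rw [hBdef, add_sub_cancel_left]
    rw [hP, hQ, sub_mul, sub_mul, mul_nonsing_inv _ hA, mul_nonsing_inv _ hB, one_mul] at hhat
    exact sub_right_injective hhat
  have hinv : A⁻¹ = B⁻¹ := by
    rw [mul_assoc, hΩA] at hrss
    simpa only [nonsing_inv_mul_cancel_right _ _ hB] using congrArg (· * B) hrss
  have hΩ : Ω = 1 := by
    simpa only [hinv, nonsing_inv_mul_cancel_right _ _ hB, nonsing_inv_mul _ hB]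
      using congrArg (· * B) hΩA
  have hAB : A = B := inv_inj hinv hA
  rw [hAdef, hBdef, hΩ] at hAB
  exact ⟨hΩ, add_left_cancel hAB⟩

end Matrix

theorem stmt_19_general {n k : ℕ}
    (X : Matrix (Fin n) (Fin k) ℝ) (hX : X.rank = k)
    (Ω : Matrix (Fin n) (Fin n) ℝ) (hΩ : Ω.PosDef)
    (K₁ K₂ : Matrix (Fin k) (Fin k) ℝ) (hK₁ : K₁.PosSemidef) (hK₂ : K₂.PosSemidef) :
    (K₁ * Xᵀ * (Ω + X * K₁ * Xᵀ)⁻¹ = K₂ * Xᵀ * (1 + X * K₂ * Xᵀ)⁻¹ ∧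
      (Ω + X * K₁ * Xᵀ)⁻¹ * Ω * (Ω + X * K₁ * Xᵀ)⁻¹ =
        (1 + X * K₂ * Xᵀ)⁻¹ * (1 + X * K₂ * Xᵀ)⁻¹) ↔
    (Ω = 1 ∧ K₁ = K₂) := by
  have hXinj : Function.Injective X.mulVec :=
    mulVec_injective_of_rank_eq_card_s19 (by rwa [Fintype.card_fin])
  have hXKX {K : Matrix (Fin k) (Fin k) ℝ} (hK : K.PosSemidef) : (X * K * Xᵀ).PosSemidef := by
    simpa only [conjTranspose_eq_transpose_of_trivial] using hK.mul_mul_conjTranspose_same X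
  have hA := (hΩ.add_posSemidef (hXKX hK₁)).det_pos.ne'.isUnit
  have hB := (PosDef.one.add_posSemidef (hXKX hK₂)).det_pos.ne'.isUnit
  constructor
  · rintro ⟨hhat, hrss⟩
    obtain ⟨hΩ1, hXK⟩ := eq_one_and_eq_of_hat_eq_of_rss_eq hA hB
      (by simpa only [Matrix.mul_assoc] using congrArg (X * ·) hhat) hrss
    exact ⟨hΩ1, mul_mul_transpose_injective_of_injective_mulVec hXinj hXK⟩
  · rintro ⟨rfl, rfl⟩
    exact ⟨rfl, by rw [Matrix.mul_one]⟩

theorem stmt_19 {n k : ℕ} (hnk : k < n)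
    (X : Matrix (Fin n) (Fin k) ℝ) (hX : X.rank = k)
    (Ω : Matrix (Fin n) (Fin n) ℝ) (hΩ : Ω.PosDef)
    (K₁ K₂ : Matrix (Fin k) (Fin k) ℝ) (hK₁ : K₁.PosSemidef) (hK₂ : K₂.PosSemidef) :
    (K₁ * Xᵀ * (Ω + X * K₁ * Xᵀ)⁻¹ = K₂ * Xᵀ * (1 + X * K₂ * Xᵀ)⁻¹ ∧
      (Ω + X * K₁ * Xᵀ)⁻¹ * Ω * (Ω + X * K₁ * Xᵀ)⁻¹ =
        (1 + X * K₂ * Xᵀ)⁻¹ * (1 + X * K₂ * Xᵀ)⁻¹) ↔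
    (Ω = 1 ∧ K₁ = K₂) :=
  stmt_19_general X hX Ω hΩ K₁ K₂ hK₁ hK₂
end
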